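/- Let r_a, v_max, h > 0 and set r' = √(4·r_a² + h²·v_max²). If x, y ∈ ℝ³ satisfy ‖x‖ ≥ r', ‖y‖ ≥ r' and ‖x − y‖ ≤ 2·h·v_max, then for every t ∈ [0, 1] the point (1 − t)·x + t·y on the segment from x to y satisfies ‖(1 − t)·x + t·y‖ ≥ 2·r_a. (Hence if the relative position of two agents has norm at least r' at two consecutive sampling instants, and each agent moves at most h·v_max between the instants, the agents remain at distance at least 2·r_a along the interpolated motion.) -/

import Mathlib

/-!
On the segment `z = (1 - t) • x + t • y` the squared norm is the convex combination
`(1 - t) ‖x‖² + t ‖y‖²` corrected by `t (1 - t) ‖x - y‖²`, and `t (1 - t) ≤ 1/4`.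
Hence `‖z‖² ≥ r'² - (2 h v_max)² / 4 = 4 r_a²`, which is exactly how `r'` is chosen.
-/

open Set

section InnerProductSpace

variable {E : Type*} [NormedAddCommGroup E] [InnerProductSpace ℝ E]

theorem norm_smul_add_smul_sq (x y : E) (t : ℝ) :
    ‖(1 - t) • x + t • y‖ ^ 2 =
      (1 - t) * ‖x‖ ^ 2 + t * ‖y‖ ^ 2 - t * (1 - t) * ‖x - y‖ ^ 2 := by
  simp only [← real_inner_self_eq_norm_sq, inner_add_add_self, inner_sub_sub_self,
    inner_smul_left, inner_smul_right, real_inner_comm x y, RCLike.conj_to_real]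
  ring

theorem sq_sub_sq_div_four_le_norm_smul_add_smul_sq {x y : E} {r d t : ℝ} (hr : 0 ≤ r)
    (hx : r ≤ ‖x‖) (hy : r ≤ ‖y‖) (hxy : ‖x - y‖ ≤ d) (ht : t ∈ Icc (0 : ℝ) 1) :
    r ^ 2 - d ^ 2 / 4 ≤ ‖(1 - t) • x + t • y‖ ^ 2 := by
  obtain ⟨ht0, ht1⟩ := ht
  have hx2 : r ^ 2 ≤ ‖x‖ ^ 2 := pow_le_pow_left₀ hr hx 2
  have hy2 : r ^ 2 ≤ ‖y‖ ^ 2 := pow_le_pow_left₀ hr hy 2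
  have hxy2 : ‖x - y‖ ^ 2 ≤ d ^ 2 := pow_le_pow_left₀ (norm_nonneg _) hxy 2
  have hweight : 0 ≤ t * (1 - t) := mul_nonneg ht0 (sub_nonneg.mpr ht1)
  have hweight_le : t * (1 - t) ≤ 1 / 4 := by nlinarith [sq_nonneg (2 * t - 1)]
  rw [norm_smul_add_smul_sq]
  nlinarith [mul_le_mul hweight_le hxy2 (sq_nonneg _) (by norm_num : (0 : ℝ) ≤ 1 / 4),
    mul_le_mul_of_nonneg_left hxy2 hweight]

end InnerProductSpace

theorem interpolated_separation_general (ra vmax h : ℝ)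
    (r' : ℝ) (hr' : r' = Real.sqrt (4 * ra ^ 2 + h ^ 2 * vmax ^ 2))
    (x y : EuclideanSpace ℝ (Fin 3)) (hx : ‖x‖ ≥ r') (hy : ‖y‖ ≥ r')
    (hxy : ‖x - y‖ ≤ 2 * h * vmax) :
    ∀ t ∈ Set.Icc (0 : ℝ) 1, ‖(1 - t) • x + t • y‖ ≥ 2 * ra := by
  intro t ht
  have hr'sq : r' ^ 2 = 4 * ra ^ 2 + h ^ 2 * vmax ^ 2 := by
    rw [hr', Real.sq_sqrt (by positivity)]
  have hsq : (2 * ra) ^ 2 ≤ ‖(1 - t) • x + t • y‖ ^ 2 := by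
    have := sq_sub_sq_div_four_le_norm_smul_add_smul_sq
      (hr' ▸ Real.sqrt_nonneg _) hx hy hxy ht
    linarith
  exact (le_abs_self _).trans (abs_le_of_sq_le_sq hsq (norm_nonneg _))

/-- If the relative position has norm at least
`r' = √(4 r_a² + h² v_max²)` at two consecutive instants and changes by at most
`2 h v_max`, the interpolated relative position keeps norm at least `2 r_a`. -/
theorem interpolated_separation (ra vmax h : ℝ) (hra : 0 < ra) (hv : 0 < vmax) (hh : 0 < h)
    (r' : ℝ) (hr' : r' = Real.sqrt (4 * ra ^ 2 + h ^ 2 * vmax ^ 2))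
    (x y : EuclideanSpace ℝ (Fin 3)) (hx : ‖x‖ ≥ r') (hy : ‖y‖ ≥ r')
    (hxy : ‖x - y‖ ≤ 2 * h * vmax) :
    ∀ t ∈ Set.Icc (0 : ℝ) 1, ‖(1 - t) • x + t • y‖ ≥ 2 * ra :=
  interpolated_separation_general ra vmax h r' hr' x y hx hy hxy
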